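/- Let p ∈ Ŵ satisfy Q̂(p) ≠ 0 and define w(a,b,c) = B̂(a·(b·(c·p)), p) for a,b,c ∈ V. For every nonzero isotropic vector v ∈ V, the kernel U = {u ∈ V : w(v,u,a) = 0 for all a ∈ V} of the skew-symmetric 2-form w(v,·,·) equals {u ∈ V : u·(v·p) = 0}; it is a 3-dimensional isotropic subspace of V containing v. -/
import Mathlib


namespace SSD

noncomputable section

/-- `V` is the 7-dimensional complex vector space `ℂ^7`. -/
abbrev V7 : Type := Fin 7 → ℂ

/-- `Ŵ` is the 8-dimensional spin space, with basis (in this order):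
`1, v̂₅, v̂₆, v̂₇, v̂₅v̂₆, v̂₆v̂₇, v̂₅v̂₇, v̂₅v̂₆v̂₇`. -/
abbrev W8 : Type := Fin 8 → ℂ

/-- The constant `1/√2` as a complex number. -/
def is2 : ℂ := ((Real.sqrt 2 : ℝ) : ℂ)⁻¹

/-- The Clifford action of `v ∈ V` on `x ∈ Ŵ`:  `e₅,e₆,e₇` act by exterior
multiplication by `v̂₅,v̂₆,v̂₇`; `e₁,e₂,e₃` act by `−∂/∂v̂₇, ∂/∂v̂₆, −∂/∂v̂₅`;
`e₄` acts by `(1/√2)·(−1)^deg`. Written out in coordinates. -/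
def actFun (v : V7) (x : W8) : W8 := fun k =>
  match k with
  | 0 => -(v 0) * x 3 + v 1 * x 2 - v 2 * x 1 + is2 * v 3 * x 0
  | 1 => v 0 * x 6 - v 1 * x 4 - is2 * v 3 * x 1 + v 4 * x 0
  | 2 => v 0 * x 5 - v 2 * x 4 - is2 * v 3 * x 2 + v 5 * x 0
  | 3 => v 1 * x 5 - v 2 * x 6 - is2 * v 3 * x 3 + v 6 * x 0
  | 4 => -(v 0) * x 7 + is2 * v 3 * x 4 + v 4 * x 2 - v 5 * x 1
  | 5 => -(v 2) * x 7 + is2 * v 3 * x 5 + v 5 * x 3 - v 6 * x 2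
  | 6 => -(v 1) * x 7 + is2 * v 3 * x 6 + v 4 * x 3 - v 6 * x 1
  | 7 => -(is2 * v 3) * x 7 + v 4 * x 5 - v 5 * x 6 + v 6 * x 4

/-- The action `v · x`, packaged as a bilinear map. -/
def act : V7 →ₗ[ℂ] W8 →ₗ[ℂ] W8 :=
  LinearMap.mk₂ ℂ actFun
    (fun m m' n => by funext k; fin_cases k <;> simp [actFun] <;> ring)
    (fun c m n => by funext k; fin_cases k <;> simp [actFun] <;> ring)
    (fun m n n' => by funext k; fin_cases k <;> simp [actFun] <;> ring)
    (fun c m n => by funext k; fin_cases k <;> simp [actFun] <;> ring)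

/-- The bilinear form `B` on `V`: `B(eᵢ,eⱼ) = (−1)^(i+1)` if `i+j=8`, else `0`. -/
def Bform (u w : V7) : ℂ :=
  u 0 * w 6 + u 6 * w 0 - u 1 * w 5 - u 5 * w 1 + u 2 * w 4 + u 4 * w 2 - u 3 * w 3

/-- The quadratic form `Q(v) = B(v,v)/2` on `V`. -/
def Qform (v : V7) : ℂ := Bform v v / 2

/-- The quadratic form `Q̂` on `Ŵ`:
`Q̂ = α_∅α₅₆₇ + α₆α₅₇ − α₇α₅₆ − α₆₇α₅` in the coordinates of the basis above. -/
def Qhat (x : W8) : ℂ := x 0 * x 7 + x 2 * x 6 - x 3 * x 4 - x 5 * x 1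

/-- The bilinear form `B̂(p,q) = Q̂(p+q) − Q̂(p) − Q̂(q)` on `Ŵ`. -/
def Bhat (p q : W8) : ℂ := Qhat (p + q) - Qhat p - Qhat q

/-- A subspace `U ⊆ V` is isotropic if `B` vanishes identically on it. -/
def IsIsotropic (U : Submodule ℂ V7) : Prop :=
  ∀ u ∈ U, ∀ w ∈ U, Bform u w = 0

/-- `L_U = {x ∈ Ŵ | u·x = 0 for all u ∈ U}`. -/
def LU (U : Submodule ℂ V7) : Submodule ℂ W8 :=
  ⨅ u ∈ U, LinearMap.ker (act u)

/-- `ψ : Ŵ → V` is an invariant surjection with spinor `p` if `p ≠ 0`, `ψ(p)=0`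
and `ψ(v·p) = v` for all `v ∈ V`. -/
def IsInvSurj (ψ : W8 →ₗ[ℂ] V7) (p : W8) : Prop :=
  p ≠ 0 ∧ ψ p = 0 ∧ ∀ v : V7, ψ (act v p) = v

lemma is2_sq : is2 * is2 = 2⁻¹ := by
  rw [is2, ← mul_inv, ← Complex.ofReal_mul, Real.mul_self_sqrt (by norm_num)]
  norm_num

lemma clifford (u w : V7) (x : W8) :
    act u (act w x) + act w (act u x) = -(Bform u w) • x := by
  funext k
  fin_cases k <;>
    (simp [act, actFun, Bform, Pi.add_apply, Pi.smul_apply, smul_eq_mul]) <;>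
    (first
      | linear_combination (2 * u 3 * w 3 * x 0) * is2_sq
      | linear_combination (2 * u 3 * w 3 * x 1) * is2_sq
      | linear_combination (2 * u 3 * w 3 * x 2) * is2_sq
      | linear_combination (2 * u 3 * w 3 * x 3) * is2_sq
      | linear_combination (2 * u 3 * w 3 * x 4) * is2_sq
      | linear_combination (2 * u 3 * w 3 * x 5) * is2_sq
      | linear_combination (2 * u 3 * w 3 * x 6) * is2_sq
      | linear_combination (2 * u 3 * w 3 * x 7) * is2_sq)

lemma bhat_expand (x y : W8) : Bhat x y =
    x 0*y 7 + x 7*y 0 + x 2*y 6 + x 6*y 2 - x 3*y 4 - x 4*y 3 - x 5*y 1 - x 1*y 5 := by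
  simp only [Bhat, Qhat, Pi.add_apply]; ring

lemma bhat_symm (x y : W8) : Bhat x y = Bhat y x := by rw [bhat_expand, bhat_expand]; ring

lemma bhat_add_left (x y z : W8) : Bhat (x + y) z = Bhat x z + Bhat y z := by
  simp only [bhat_expand, Pi.add_apply]; ring

lemma bhat_smul_left (c : ℂ) (x z : W8) : Bhat (c • x) z = c * Bhat x z := by
  simp only [bhat_expand, Pi.smul_apply, smul_eq_mul]; ring

lemma bhat_add_right (x y z : W8) : Bhat x (y + z) = Bhat x y + Bhat x z := by
  simp only [bhat_expand, Pi.add_apply]; ring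

lemma bhat_smul_right (c : ℂ) (x z : W8) : Bhat x (c • z) = c * Bhat x z := by
  simp only [bhat_expand, Pi.smul_apply, smul_eq_mul]; ring

lemma bhat_self (x : W8) : Bhat x x = 2 * Qhat x := by
  simp only [bhat_expand, Qhat]; ring

lemma bhat_skew (u : V7) (x y : W8) : Bhat (act u x) y = - Bhat x (act u y) := by
  simp only [bhat_expand, act, LinearMap.mk₂_apply, actFun]
  ring

lemma bform_symm (u w : V7) : Bform u w = Bform w u := by simp only [Bform]; ring

lemma bform_nondeg (u : V7) (h : ∀ w, Bform u w = 0) : u = 0 := by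
  have h0 := h (Pi.single 6 1)
  have h1 := h (Pi.single 5 1)
  have h2 := h (Pi.single 4 1)
  have h3 := h (Pi.single 3 1)
  have h4 := h (Pi.single 2 1)
  have h5 := h (Pi.single 1 1)
  have h6 := h (Pi.single 0 1)
  simp [Bform, Pi.single_apply] at h0 h1 h2 h3 h4 h5 h6
  funext i
  fin_cases i <;> simp_all

lemma bhat_nondeg (x : W8) (h : ∀ y, Bhat x y = 0) : x = 0 := by
  have h0 := h (Pi.single 7 1)
  have h1 := h (Pi.single 5 1)
  have h2 := h (Pi.single 6 1)
  have h3 := h (Pi.single 4 1)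
  have h4 := h (Pi.single 3 1)
  have h5 := h (Pi.single 1 1)
  have h6 := h (Pi.single 2 1)
  have h7 := h (Pi.single 0 1)
  simp [bhat_expand, Pi.single_apply] at h0 h1 h2 h3 h4 h5 h6 h7
  funext i
  fin_cases i <;> simp_all

/-- `B̂(a·p, p) = 0`. -/
lemma bhat_act_self (a : V7) (p : W8) : Bhat (act a p) p = 0 := by
  have h := bhat_skew a p p
  rw [bhat_symm p (act a p)] at h
  have h2 : (2:ℂ) * Bhat (act a p) p = 0 := by linear_combination h
  have := mul_eq_zero.mp h2
  simpa using this

/-- `B̂(a·x, b·x) = B(a,b)·Q̂(x)`. -/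
lemma bhat_act_act (a b : V7) (x : W8) :
    Bhat (act a x) (act b x) = Bform a b * Qhat x := by
  have h1 : Bhat (act a x) (act b x) = -Bhat x (act a (act b x)) := bhat_skew a x (act b x)
  have h2 : Bhat (act b x) (act a x) = -Bhat x (act b (act a x)) := bhat_skew b x (act a x)
  have h3 := clifford a b x
  have h4 : Bhat x (act a (act b x)) + Bhat x (act b (act a x))
      = Bhat x (-(Bform a b) • x) := by rw [← bhat_add_right, h3]
  have h5 : Bhat x (-(Bform a b) • x) = -(Bform a b) * (2 * Qhat x) := by
    rw [bhat_smul_right, bhat_self]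
  have h6 := bhat_symm (act a x) (act b x)
  linear_combination (h1 + h2 - h4 - h5 + h6) / 2

def BformL : V7 →ₗ[ℂ] V7 →ₗ[ℂ] ℂ :=
  LinearMap.mk₂ ℂ Bform
    (fun m m' n => by simp only [Bform, Pi.add_apply]; ring)
    (fun c m n => by simp only [Bform, Pi.smul_apply, smul_eq_mul]; ring)
    (fun m n n' => by simp only [Bform, Pi.add_apply]; ring)
    (fun c m n => by simp only [Bform, Pi.smul_apply, smul_eq_mul]; ring)

def BhatL : W8 →ₗ[ℂ] W8 →ₗ[ℂ] ℂ :=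
  LinearMap.mk₂ ℂ Bhat bhat_add_left bhat_smul_left bhat_add_right bhat_smul_right

/-- A totally isotropic subspace has dimension at most half the total. -/
lemma isotropic_le {M : Type*} [AddCommGroup M] [Module ℂ M] [FiniteDimensional ℂ M]
    (b : M →ₗ[ℂ] M →ₗ[ℂ] ℂ) (hnd : ∀ x : M, (∀ y, b x y = 0) → x = 0)
    (U : Submodule ℂ M) (hU : ∀ u ∈ U, ∀ w ∈ U, b u w = 0) :
    2 * Module.finrank ℂ U ≤ Module.finrank ℂ M := by
  classical
  have hbinj : Function.Injective b := by
    rw [injective_iff_map_eq_zero]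
    intro x hx
    exact hnd x (fun y => by rw [hx]; rfl)
  have hbsurj : Function.Surjective b := by
    have hfr : Module.finrank ℂ M = Module.finrank ℂ (Module.Dual ℂ M) :=
      (Subspace.dual_finrank_eq).symm
    exact (LinearMap.injective_iff_surjective_of_finrank_eq_finrank hfr).mp hbinj
  set g : M →ₗ[ℂ] Module.Dual ℂ U := (U.subtype.dualMap).comp b with hg
  have hgsurj : Function.Surjective g :=
    (LinearMap.dualMap_surjective_of_injective U.injective_subtype).comp hbsurj
  have hUker : U ≤ LinearMap.ker g := by
    intro u hu
    simp only [LinearMap.mem_ker]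
    ext w
    simpa [g] using hU u hu w w.2
  have h1 := LinearMap.finrank_range_add_finrank_ker g
  have h2 : LinearMap.range g = ⊤ := LinearMap.range_eq_top.mpr hgsurj
  have h3 : Module.finrank ℂ (Module.Dual ℂ U) = Module.finrank ℂ U :=
    Subspace.dual_finrank_eq
  have h4 : Module.finrank ℂ U ≤ Module.finrank ℂ (LinearMap.ker g) :=
    Submodule.finrank_mono hUker
  rw [h2, finrank_top, h3] at h1
  omega

/-- let `Q̂(p) ≠ 0`, `w(a,b,c) = B̂(a·(b·(c·p)),p)` and let `v` be
a nonzero isotropic vector.  The kernel of the 2-form `w(v,·,·)` equals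
`{u | u·(v·p) = 0}`; it is a 3-dimensional isotropic subspace containing `v`. -/
theorem statement_15 (p : W8) (hp : Qhat p ≠ 0)
    (v : V7) (hv : v ≠ 0) (hq : Qform v = 0) :
    {u : V7 | ∀ a : V7, Bhat (act v (act u (act a p))) p = 0}
      = (LinearMap.ker (act.flip (act v p)) : Set V7) ∧
    Module.finrank ℂ (LinearMap.ker (act.flip (act v p))) = 3 ∧
    IsIsotropic (LinearMap.ker (act.flip (act v p))) ∧
    v ∈ LinearMap.ker (act.flip (act v p)) := by
  classical
  have hp0 : p ≠ 0 := fun h => hp (by simp [h, Qhat])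
  have hBvv : Bform v v = 0 := by
    have h := hq
    rw [Qform, div_eq_zero_iff] at h
    rcases h with h | h
    · exact h
    · norm_num at h
  set s : W8 := act v p with hs
  have hvs : act v s = 0 := by
    have h := clifford v v p
    rw [hBvv] at h
    simp only [neg_zero, zero_smul] at h
    rw [← hs] at h
    have h2 : (2:ℂ) • act v s = 0 := by rw [two_smul]; exact h
    rcases smul_eq_zero.mp h2 with h' | h'
    · norm_num at h'
    · exact h'
  have hsne : s ≠ 0 := by
    intro h0
    apply hv
    apply bform_nondeg
    intro w
    have h := bhat_act_act v w p
    rw [← hs, h0] at h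
    have hz : Bhat 0 (act w p) = 0 := by simp [bhat_expand]
    rw [hz] at h
    rcases mul_eq_zero.mp h.symm with h' | h'
    · exact h'
    · exact absurd h' hp
  have hQs : Qhat s = 0 := by
    have h := bhat_act_act v v p
    rw [← hs, hBvv, zero_mul] at h
    have h2 : (2:ℂ) * Qhat s = 0 := by rw [← bhat_self]; exact h
    rcases mul_eq_zero.mp h2 with h' | h'
    · norm_num at h'
    · exact h'
  set K := LinearMap.ker (act.flip s) with hK
  have hmemK : ∀ u : V7, u ∈ K ↔ act u s = 0 := fun u => by
    simp [hK, LinearMap.mem_ker, LinearMap.flip_apply]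
  have part4 : v ∈ K := (hmemK v).mpr hvs
  have part3 : IsIsotropic K := by
    intro u hu w hw
    have hu' := (hmemK u).mp hu
    have hw' := (hmemK w).mp hw
    have h := clifford u w s
    rw [hu', hw'] at h
    simp only [map_zero, add_zero, zero_add] at h
    have h2 : Bform u w • s = 0 := by
      have h3 := h.symm
      rwa [neg_smul, neg_eq_zero] at h3
    rcases smul_eq_zero.mp h2 with h' | h'
    · exact h'
    · exact absurd h' hsne
  have hV7 : Module.finrank ℂ V7 = 7 := by simp
  have hW8 : Module.finrank ℂ W8 = 8 := by simp
  -- dimension count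
  have hndB : ∀ x : V7, (∀ y, BformL x y = 0) → x = 0 := fun x hx =>
    bform_nondeg x (fun w => by simpa [BformL] using hx w)
  have hndBh : ∀ x : W8, (∀ y, BhatL x y = 0) → x = 0 := fun x hx =>
    bhat_nondeg x (fun w => by simpa [BhatL] using hx w)
  have hdim1 : 2 * Module.finrank ℂ K ≤ 7 := by
    have h := isotropic_le BformL hndB K (by
      intro u hu w hw
      simpa [BformL] using part3 u hu w hw)
    rwa [hV7] at h
  have hdim2 : 2 * Module.finrank ℂ (LinearMap.range (act.flip s)) ≤ 8 := by
    have h := isotropic_le BhatL hndBh (LinearMap.range (act.flip s)) (by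
      rintro x ⟨a, rfl⟩ y ⟨b, rfl⟩
      simp only [LinearMap.flip_apply, BhatL, LinearMap.mk₂_apply]
      rw [bhat_act_act, hQs, mul_zero])
    rwa [hW8] at h
  have hrn := LinearMap.finrank_range_add_finrank_ker (act.flip s)
  rw [hV7, ← hK] at hrn
  have part2 : Module.finrank ℂ K = 3 := by omega
  refine ⟨?_, part2, part3, part4⟩
  -- set equality
  ext u
  simp only [Set.mem_setOf_eq, SetLike.mem_coe]
  rw [hmemK u]
  constructor
  · intro hu
    have hy : ∀ a : V7, Bhat (act a p) (act u s) = 0 := by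
      intro a
      have h := hu a
      rw [bhat_skew v, bhat_skew u, neg_neg, ← hs] at h
      exact h
    set c : ℂ := Bform u v with hc
    have hysp : Bhat (act u s) p = -(c * Qhat p) := by
      rw [bhat_skew u s p, bhat_symm s (act u p), hs, bhat_act_act, hc]
    set z : W8 := act u s + (c/2) • p with hz
    have hz_img : ∀ a : V7, Bhat (act a p) z = 0 := by
      intro a
      rw [hz, bhat_add_right, bhat_smul_right, hy a, bhat_symm, bhat_symm p (act a p),
        bhat_act_self]
      ring
    have hz_p : Bhat p z = 0 := by
      rw [hz, bhat_add_right, bhat_smul_right, bhat_symm p (act u s), hysp, bhat_self]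
      ring
    have hTinj : Function.Injective (act.flip p) := by
      rw [injective_iff_map_eq_zero]
      intro a ha
      simp only [LinearMap.flip_apply] at ha
      apply bform_nondeg
      intro w
      have h := bhat_act_act a w p
      rw [ha] at h
      have h0 : Bhat 0 (act w p) = 0 := by simp [bhat_expand]
      rw [h0] at h
      rcases mul_eq_zero.mp h.symm with h' | h'
      · exact h'
      · exact absurd h' hp
    have hrank7 : Module.finrank ℂ (LinearMap.range (act.flip p)) = 7 := by
      rw [LinearMap.finrank_range_of_inj hTinj, hV7]
    have hp_notin : p ∉ LinearMap.range (act.flip p) := by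
      rintro ⟨a, ha⟩
      simp only [LinearMap.flip_apply] at ha
      have h := bhat_act_self a p
      rw [ha, bhat_self] at h
      rcases mul_eq_zero.mp h with h' | h'
      · norm_num at h'
      · exact absurd h' hp
    have hinf : LinearMap.range (act.flip p) ⊓ Submodule.span ℂ {p} = ⊥ := by
      rw [Submodule.eq_bot_iff]
      rintro x hx
      rcases Submodule.mem_inf.mp hx with ⟨hx1, hx2⟩
      rcases Submodule.mem_span_singleton.mp hx2 with ⟨t, rfl⟩
      by_cases ht : t = 0
      · rw [ht, zero_smul]
      · exfalso
        apply hp_notin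
        rcases hx1 with ⟨a, ha⟩
        refine ⟨t⁻¹ • a, ?_⟩
        rw [map_smul, ha, smul_smul, inv_mul_cancel₀ ht, one_smul]
    have hsup : LinearMap.range (act.flip p) ⊔ Submodule.span ℂ {p} = ⊤ := by
      apply Submodule.eq_top_of_finrank_eq
      have h := Submodule.finrank_sup_add_finrank_inf_eq (LinearMap.range (act.flip p))
        (Submodule.span ℂ {p})
      rw [hinf, finrank_bot, finrank_span_singleton hp0, hrank7] at h
      rw [hW8]
      omega
    have hz_all : ∀ w : W8, Bhat w z = 0 := by
      intro w
      have hw : w ∈ LinearMap.range (act.flip p) ⊔ Submodule.span ℂ {p} := by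
        rw [hsup]; trivial
      rcases Submodule.mem_sup.mp hw with ⟨x, hx, y, hy', rfl⟩
      rcases hx with ⟨a, rfl⟩
      rcases Submodule.mem_span_singleton.mp hy' with ⟨t, rfl⟩
      rw [bhat_add_left, bhat_smul_left, hz_p]
      simp only [LinearMap.flip_apply]
      rw [hz_img a]
      ring
    have hz0 : z = 0 := bhat_nondeg z (fun y => by rw [bhat_symm]; exact hz_all y)
    have hus : act u s = -((c/2) • p) := by
      rw [hz] at hz0
      exact eq_neg_of_add_eq_zero_left hz0
    have hvy : act v (act u s) = -(Bform v u) • s := by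
      have h := clifford v u s
      rw [hvs, map_zero, add_zero] at h
      exact h
    have hvy2 : act v (act u s) = -((c/2) • s) := by
      rw [hus, map_neg, map_smul, ← hs]
    have hcc : Bform v u = c/2 := by
      have h := hvy.symm.trans hvy2
      rw [neg_smul, neg_inj] at h
      have h2 : (Bform v u - c/2) • s = 0 := by
        rw [sub_smul, h, sub_self]
      rcases smul_eq_zero.mp h2 with h' | h'
      · exact sub_eq_zero.mp h'
      · exact absurd h' hsne
    have hc0 : c = 0 := by
      have h : c = Bform v u := by rw [hc, bform_symm]
      rw [hcc] at h
      linear_combination 2 * h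
    rw [hus, hc0]
    simp
  · intro hu a
    rw [bhat_skew v, bhat_skew u, ← hs, hu, neg_neg]
    simp [bhat_expand]


end
end SSD
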